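/- Two ⊞-indecomposable centred permutations π° and σ° commute under the box-sum (π° ⊞ σ° = σ° ⊞ π°) if and only if π° = σ° or π° and σ° are one-quadrant permutations lying in opposite quadrants. -/

import Mathlib

/-- A *centred permutation*: `vals` is the one-line notation of the filled-in
permutation (length `n+1`), `origin` the index of the origin point. -/
structure CPerm where
  vals : List ℕ
  origin : ℕ
deriving DecidableEq

namespace CPerm

/-- Length of a centred permutation (origin does not count). -/
def len (p : CPerm) : ℕ := p.vals.length - 1

/-- A genuine centred permutation: one-line notation is a permutation of
`{0, …, N-1}` and the origin index is in range. -/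
def IsValid (p : CPerm) : Prop :=
  p.vals ≠ [] ∧ p.origin < p.vals.length ∧ p.vals.Perm (List.range p.vals.length)

def valAt (p : CPerm) (i : ℕ) : ℕ := p.vals.getD i 0

def originVal (p : CPerm) : ℕ := p.valAt p.origin

/-- The box-sum `p ⊞ q`: inflate the origin of `q` by a copy of `p`. -/
def boxSum (p q : CPerm) : CPerm :=
  let N := p.vals.length
  let v := q.originVal
  let shift : ℕ → ℕ := fun u => if u < v then u else u + (N - 1)
  ⟨(q.vals.take q.origin).map shift ++ p.vals.map (· + v) ++
      (q.vals.drop (q.origin + 1)).map shift,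
    q.origin + p.origin⟩

/-- The trivial centred permutation (origin only, length 0). -/
def trivial : CPerm := ⟨[0], 0⟩

/-- Iterated box-sum `σ₁ ⊞ σ₂ ⊞ ⋯ ⊞ σₙ`. -/
def boxSumList (l : List CPerm) : CPerm := l.foldr boxSum trivial

/-- `p` is ⊞-indecomposable: nonempty and not a box-sum of two strictly smaller
centred permutations. -/
def BoxIndecomposable (p : CPerm) : Prop :=
  1 ≤ p.len ∧
    ¬∃ a b : CPerm, a.IsValid ∧ b.IsValid ∧ 1 ≤ a.len ∧ 1 ≤ b.len ∧ boxSum a b = p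

/-- The non-origin point at index `i` of `p` lies in quadrant `q` (1–4,
numbered anticlockwise). -/
def InQuadrant (p : CPerm) (q : ℕ) (i : ℕ) : Prop :=
  i < p.vals.length ∧ i ≠ p.origin ∧
    ((q = 1 ∧ p.origin < i ∧ p.originVal < p.valAt i) ∨
     (q = 2 ∧ i < p.origin ∧ p.originVal < p.valAt i) ∨
     (q = 3 ∧ i < p.origin ∧ p.valAt i < p.originVal) ∨
     (q = 4 ∧ p.origin < i ∧ p.valAt i < p.originVal))

/-- All non-origin points of `p` lie in quadrant `q`. -/
def OneQuadrant (p : CPerm) (q : ℕ) : Prop :=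
  ∀ i, i < p.vals.length → i ≠ p.origin → InQuadrant p q i

def OppositeQuadrants (q₁ q₂ : ℕ) : Prop :=
  (q₁ = 1 ∧ q₂ = 3) ∨ (q₁ = 3 ∧ q₂ = 1) ∨ (q₁ = 2 ∧ q₂ = 4) ∨ (q₁ = 4 ∧ q₂ = 2)

/-- Centred pattern containment `p ≤ q` (origins must match up). -/
def PatternLE (p q : CPerm) : Prop :=
  ∃ f : ℕ → ℕ,
    (∀ i j, i < p.vals.length → j < p.vals.length → i < j → f i < f j) ∧
    (∀ i, i < p.vals.length → f i < q.vals.length) ∧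
    f p.origin = q.origin ∧
    (∀ i j, i < p.vals.length → j < p.vals.length →
      (p.valAt i < p.valAt j ↔ q.valAt (f i) < q.valAt (f j)))

/-- A centred permutation class: nonempty, consisting of valid centred
permutations, and downward closed under centred containment. -/
def IsClass (S : Set CPerm) : Prop :=
  S.Nonempty ∧ (∀ p ∈ S, p.IsValid) ∧
    ∀ p q : CPerm, q ∈ S → p.IsValid → PatternLE p q → p ∈ S

/-- `S` is closed under the box-sum. -/
def BoxClosed (S : Set CPerm) : Prop := ∀ p ∈ S, ∀ q ∈ S, boxSum p q ∈ S

/-- Number of centred permutations of length `n` in `S`. -/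
noncomputable def count (S : Set CPerm) (n : ℕ) : ℕ := {p | p ∈ S ∧ p.len = n}.ncard

/-- The single-point centred permutation in quadrant `q`. -/
def mu : ℕ → CPerm
  | 1 => ⟨[0, 1], 0⟩
  | 2 => ⟨[1, 0], 1⟩
  | 3 => ⟨[0, 1], 1⟩
  | 4 => ⟨[1, 0], 0⟩
  | _ => ⟨[0], 0⟩

def AdjacentQuadrants (a b : ℕ) : Prop :=
  (a, b) = (1, 2) ∨ (a, b) = (2, 3) ∨ (a, b) = (3, 4) ∨ (a, b) = (4, 1) ∨
  (a, b) = (2, 1) ∨ (a, b) = (3, 2) ∨ (a, b) = (4, 3) ∨ (a, b) = (1, 4)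

/-- The adjacency condition on a centred class. -/
def AdjacencyCondition (S : Set CPerm) : Prop :=
  (∃! q : ℕ, q ∈ ({1, 2, 3, 4} : Set ℕ) ∧ mu q ∈ S) ∨
    ∃ a b : ℕ, AdjacentQuadrants a b ∧ mu a ∈ S ∧ mu b ∈ S

end CPerm

namespace CPerm

/-! ### Basic facts -/

lemma getD_map' (f : ℕ → ℕ) (l : List ℕ) (n : ℕ) (h : n < l.length) :
    (l.map f).getD n 0 = f (l.getD n 0) := by
  rw [List.getD_eq_getElem _ _ (by simpa), List.getD_eq_getElem _ _ h, List.getElem_map]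

lemma getD_take' (l : List ℕ) (n i : ℕ) (h : i < n) (h2 : i < l.length) :
    (l.take n).getD i 0 = l.getD i 0 := by
  rw [List.getD_eq_getElem _ _ (by simp; omega), List.getD_eq_getElem _ _ h2, List.getElem_take]

lemma getD_drop' (l : List ℕ) (n i : ℕ) (h : n + i < l.length) :
    (l.drop n).getD i 0 = l.getD (n + i) 0 := by
  rw [List.getD_eq_getElem _ _ (by simp; omega), List.getD_eq_getElem _ _ h, List.getElem_drop]

variable {p : CPerm}

lemma IsValid.nodup (hp : p.IsValid) : p.vals.Nodup :=
  hp.2.2.nodup_iff.2 List.nodup_range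

lemma IsValid.mem_iff (hp : p.IsValid) {x : ℕ} : x ∈ p.vals ↔ x < p.vals.length := by
  rw [hp.2.2.mem_iff, List.mem_range]

lemma valAt_mem (hi : i < p.vals.length) : p.valAt i ∈ p.vals := by
  rw [valAt, List.getD_eq_getElem _ _ hi]; exact List.getElem_mem _

lemma IsValid.valAt_lt (hp : p.IsValid) (hi : i < p.vals.length) :
    p.valAt i < p.vals.length := hp.mem_iff.1 (valAt_mem hi)

lemma IsValid.exists_idx (hp : p.IsValid) {x : ℕ} (hx : x < p.vals.length) :
    ∃ i, i < p.vals.length ∧ p.valAt i = x := by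
  have hm : x ∈ p.vals := hp.mem_iff.2 hx
  have hlt := List.idxOf_lt_length_iff.2 hm
  exact ⟨p.vals.idxOf x, hlt, by
    rw [valAt, List.getD_eq_getElem _ _ hlt]; exact List.getElem_idxOf hlt⟩

lemma IsValid.valAt_inj (hp : p.IsValid) {i j : ℕ} (hi : i < p.vals.length)
    (hj : j < p.vals.length) (h : p.valAt i = p.valAt j) : i = j := by
  simp only [valAt] at h
  rw [List.getD_eq_getElem _ _ hi, List.getD_eq_getElem _ _ hj] at h
  exact hp.nodup.getElem_inj_iff.1 h

lemma IsValid.originVal_lt (hp : p.IsValid) : p.originVal < p.vals.length :=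
  hp.valAt_lt hp.2.1

/-! ### values of a box-sum -/

section boxVals
variable (q : CPerm)

lemma boxSum_vals (p q : CPerm) : (boxSum p q).vals =
    (q.vals.take q.origin).map (fun u => if u < q.originVal then u else u + (p.vals.length - 1))
      ++ p.vals.map (· + q.originVal) ++
      (q.vals.drop (q.origin + 1)).map
        (fun u => if u < q.originVal then u else u + (p.vals.length - 1)) := rfl

lemma boxSum_origin (p q : CPerm) : (boxSum p q).origin = q.origin + p.origin := rfl

lemma boxSum_length (p q : CPerm) (hq : q.IsValid) :
    (boxSum p q).vals.length = p.vals.length + q.vals.length - 1 := by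
  rw [boxSum_vals]
  have := hq.2.1
  simp [List.length_take, List.length_drop]
  omega

lemma boxSum_valAt_left (p q : CPerm) (hq : q.IsValid) {k : ℕ} (hk : k < q.origin) :
    (boxSum p q).vals.getD k 0 =
      (if q.valAt k < q.originVal then q.valAt k else q.valAt k + (p.vals.length - 1)) := by
  have hb := hq.2.1
  rw [boxSum_vals, List.append_assoc,
    List.getD_append _ _ _ _ (by simp [List.length_take]; omega),
    getD_map' _ _ _ (by simp [List.length_take]; omega),
    getD_take' _ _ _ hk (by omega)]
  rfl

lemma boxSum_valAt_mid (p q : CPerm) (hp : p.IsValid) (hq : q.IsValid) {k : ℕ}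
    (hk1 : q.origin ≤ k) (hk2 : k < q.origin + p.vals.length) :
    (boxSum p q).vals.getD k 0 = p.valAt (k - q.origin) + q.originVal := by
  have hb := hq.2.1
  have hl1 : (List.map (fun u => if u < q.originVal then u else u + (p.vals.length - 1))
      (q.vals.take q.origin)).length = q.origin := by
    simp [List.length_take]; omega
  rw [boxSum_vals, List.append_assoc, List.getD_append_right _ _ _ _ (by omega),
    List.getD_append _ _ _ _ (by rw [hl1, List.length_map]; omega),
    getD_map' _ _ _ (by rw [hl1]; omega)]
  rw [hl1]
  rfl

lemma boxSum_valAt_right (p q : CPerm) (hp : p.IsValid) (hq : q.IsValid) {k : ℕ}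
    (hk1 : q.origin + p.vals.length ≤ k) (hk2 : k + 1 < q.vals.length + p.vals.length) :
    (boxSum p q).vals.getD k 0 =
      (if q.valAt (k + 1 - p.vals.length) < q.originVal then q.valAt (k + 1 - p.vals.length)
        else q.valAt (k + 1 - p.vals.length) + (p.vals.length - 1)) := by
  have hb := hq.2.1
  have hm : 1 ≤ p.vals.length := by
    have := hp.1; cases hh : p.vals with
    | nil => exact absurd hh this
    | cons a l => simp [hh]
  have hl1 : (List.map (fun u => if u < q.originVal then u else u + (p.vals.length - 1))
      (q.vals.take q.origin)).length = q.origin := by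
    simp [List.length_take]; omega
  rw [boxSum_vals, List.append_assoc, List.getD_append_right _ _ _ _ (by omega), hl1,
    List.getD_append_right _ _ _ _ (by simp; omega),
    getD_map' _ _ _ (by simp [List.length_drop]; omega),
    getD_drop' _ _ _ (by simp; omega)]
  simp only [List.length_map]
  have : q.origin + 1 + (k - q.origin - p.vals.length) = k + 1 - p.vals.length := by omega
  rw [this]
  rfl

end boxVals

end CPerm
namespace CPerm

lemma ext' {p q : CPerm} (h1 : p.vals = q.vals) (h2 : p.origin = q.origin) : p = q := by
  cases p; cases q; simp_all

lemma range'_map_sub (w c : ℕ) : (List.range' w c).map (· - w) = List.range c := by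
  rw [List.range'_eq_map_range, List.map_map]
  have : ((fun x => x - w) ∘ (fun x => w + x)) = id := by funext x; simp
  rw [this, List.map_id]

/-- **Block decomposition.**  If a valid centred permutation `π` has a block
(interval of positions whose values form an interval) containing the origin,
then `π` is the box-sum of the block with the contraction. -/
lemma decomp (π : CPerm) (hπ : π.IsValid) (p c w : ℕ) (hc : 1 ≤ c)
    (hpc : p + c ≤ π.vals.length) (ho1 : p ≤ π.origin) (ho2 : π.origin < p + c)
    (hblk : ∀ j, j < c → w ≤ π.valAt (p + j) ∧ π.valAt (p + j) < w + c) :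
    ∃ C A : CPerm, C.IsValid ∧ A.IsValid ∧ C.len = c - 1 ∧
      A.len = π.vals.length - c ∧ boxSum C A = π := by
  set m := π.vals.length with hm
  set B := (π.vals.drop p).take c with hB
  set g : ℕ → ℕ := fun u => if u < w then u else u - (c - 1) with hg
  set O := π.vals.take p ++ π.vals.drop (p + c) with hO
  have hBlen : B.length = c := by simp [hB, List.length_take, List.length_drop]; omega
  have hBget : ∀ j, j < c → B.getD j 0 = π.valAt (p + j) := by
    intro j hj
    rw [hB, getD_take' _ _ _ hj (by simp [List.length_drop]; omega),
      getD_drop' _ _ _ (by omega)]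
    rfl
  have hBsub : B ⊆ List.range' w c := by
    intro x hx
    obtain ⟨j, hj, hxj⟩ := List.mem_iff_getElem.1 hx
    rw [hBlen] at hj
    have : x = π.valAt (p + j) := by
      rw [← hBget j hj, List.getD_eq_getElem _ _ (by rw [hBlen]; exact hj), hxj]
    rw [List.mem_range'_1]
    have := hblk j hj
    omega
  have hBsl : B.Sublist π.vals := ((π.vals.drop p).take_sublist c).trans (π.vals.drop_sublist p)
  have hBnd : B.Nodup := hπ.nodup.sublist hBsl
  have hBperm : B.Perm (List.range' w c) :=
    (hBnd.subperm hBsub).perm_of_length_le (by rw [List.length_range', hBlen])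
  have hsplit : π.vals = π.vals.take p ++ B ++ π.vals.drop (p + c) := by
    rw [hB]
    conv_lhs => rw [← List.take_append_drop p π.vals]
    rw [List.append_assoc]
    congr 1
    conv_lhs => rw [← List.take_append_drop c (π.vals.drop p)]
    rw [List.drop_drop]
    try congr 2
    try omega
  have hperm2 : π.vals.Perm (B ++ O) := by
    rw [hO]
    conv_lhs => rw [hsplit]
    rw [List.append_assoc]
    refine List.perm_append_comm.trans ?_
    rw [List.append_assoc]
    exact List.Perm.append_left _ List.perm_append_comm
  have hBOnd : (B ++ O).Nodup := hperm2.nodup_iff.1 hπ.nodup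
  have hOnd : O.Nodup := (List.nodup_append.1 hBOnd).2.1
  have hOdisj : ∀ u ∈ O, u ∉ B := by
    intro u hu hub
    exact (List.nodup_append.1 hBOnd).2.2 u hub u hu rfl
  have hOmem : ∀ u ∈ O, u ∈ π.vals := fun u hu => hperm2.mem_iff.2 (List.mem_append_right _ hu)
  have hOout : ∀ u ∈ O, u < w ∨ w + c ≤ u := by
    intro u hu
    by_contra hcon
    push_neg at hcon
    exact hOdisj u hu (hBperm.mem_iff.2 (List.mem_range'_1.2 (by omega)))
  have hOlt : ∀ u ∈ O, u < m := fun u hu => hπ.mem_iff.1 (hOmem u hu)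
  have hwc : w + c ≤ m := by
    have hmem : w + c - 1 ∈ B := hBperm.mem_iff.2 (List.mem_range'_1.2 (by omega))
    have : w + c - 1 ∈ π.vals := hBsl.subset hmem
    have := hπ.mem_iff.1 this
    omega
  -- the two pieces
  set C : CPerm := ⟨B.map (· - w), π.origin - p⟩ with hC
  set A : CPerm := ⟨(π.vals.take p).map g ++ w :: (π.vals.drop (p + c)).map g, p⟩ with hA
  have hClen : C.vals.length = c := by simp [hC, hBlen]
  have hAlen : A.vals.length = m - c + 1 := by
    simp [hA, List.length_take, List.length_drop]
    omega
  have hCvalid : C.IsValid := by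
    refine ⟨?_, ?_, ?_⟩
    · intro hnil
      have := congrArg List.length hnil
      rw [hClen] at this
      simp at this; omega
    · show π.origin - p < C.vals.length
      rw [hClen]; omega
    · rw [hClen]
      refine (hBperm.map _).trans ?_
      rw [range'_map_sub]
  have hAperm0 : A.vals.Perm (w :: O.map g) := by
    rw [hA, hO, List.map_append]
    exact List.perm_middle
  have hgO : ∀ u ∈ O, ∀ v ∈ O, g u = g v → u = v := by
    intro u hu v hv huv
    rcases hOout u hu with h1 | h1 <;> rcases hOout v hv with h2 | h2 <;>
      simp only [hg] at huv <;> split_ifs at huv <;> omega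
  have hwO : w ∉ O.map g := by
    intro hmem
    obtain ⟨u, hu, hgu⟩ := List.mem_map.1 hmem
    rcases hOout u hu with h1 | h1 <;> simp only [hg] at hgu <;> split_ifs at hgu <;> omega
  have hAnd : (w :: O.map g).Nodup := by
    refine List.nodup_cons.2 ⟨hwO, hOnd.map_on hgO⟩
  have hAsub : (w :: O.map g) ⊆ List.range (m - c + 1) := by
    intro x hx
    rw [List.mem_range]
    rcases List.mem_cons.1 hx with rfl | hx
    · omega
    · obtain ⟨u, hu, rfl⟩ := List.mem_map.1 hx
      have h1 := hOout u hu
      have h2 := hOlt u hu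
      simp only [hg]
      split_ifs <;> omega
  have hAvalid : A.IsValid := by
    refine ⟨?_, ?_, ?_⟩
    · intro hnil
      have := congrArg List.length hnil
      rw [hAlen] at this
      simp at this
    · show p < A.vals.length
      rw [hAlen]; omega
    · rw [hAlen]
      refine hAperm0.trans ?_
      refine (hAnd.subperm hAsub).perm_of_length_le ?_
      rw [List.length_range]
      have := hAperm0.length_eq
      rw [hAlen] at this
      simp only [List.length_cons, List.length_map] at this ⊢
      omega
  have hAoriginVal : A.originVal = w := by
    show A.vals.getD p 0 = w
    rw [hA]
    rw [List.getD_append_right _ _ _ _ (by simp [List.length_take]; try omega)]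
    have : p - ((π.vals.take p).map g).length = 0 := by
      simp [List.length_take]; try omega
    rw [this]
    rfl
  -- the box-sum equals π
  refine ⟨C, A, hCvalid, hAvalid, ?_, ?_, ?_⟩
  · show C.vals.length - 1 = c - 1
    rw [hClen]
  · show A.vals.length - 1 = m - c
    rw [hAlen]; omega
  · have hshg : ∀ u ∈ O,
        (if g u < A.originVal then g u else g u + (C.vals.length - 1)) = u := by
      intro u hu
      rw [hAoriginVal, hClen]
      rcases hOout u hu with h1 | h1 <;> simp only [hg] <;> split_ifs <;> omega
    have htake : A.vals.take A.origin = (π.vals.take p).map g := by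
      show A.vals.take p = _
      rw [hA]
      have hl : ((π.vals.take p).map g).length = p := by
        simp [List.length_take]; omega
      exact List.take_left' hl
    have hdrop : A.vals.drop (A.origin + 1) = (π.vals.drop (p + c)).map g := by
      show A.vals.drop (p + 1) = _
      rw [hA]
      have hl : ((π.vals.take p).map g).length = p := by
        simp [List.length_take]; omega
      rw [← List.drop_drop, List.drop_left' hl]
      rfl
    refine ext' ?_ ?_
    · rw [boxSum_vals, htake, hdrop, List.map_map, List.map_map, List.map_map]
      have e1 : (π.vals.take p).map
          ((fun u => if u < A.originVal then u else u + (C.vals.length - 1)) ∘ g)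
          = π.vals.take p :=
        (List.map_congr_left (fun u hu =>
          hshg u (by rw [hO]; exact List.mem_append_left _ hu))).trans (List.map_id _)
      have e2 : (π.vals.drop (p + c)).map
          ((fun u => if u < A.originVal then u else u + (C.vals.length - 1)) ∘ g)
          = π.vals.drop (p + c) :=
        (List.map_congr_left (fun u hu =>
          hshg u (by rw [hO]; exact List.mem_append_right _ hu))).trans (List.map_id _)
      have e3 : B.map ((fun x => x + A.originVal) ∘ fun x => x - w) = B := by
        refine (List.map_congr_left (fun b hb => ?_)).trans (List.map_id B)
        have h1 := List.mem_range'_1.1 (hBsub hb)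
        show b - w + A.originVal = b
        rw [hAoriginVal]
        omega
      rw [e1, e2, e3]
      exact hsplit.symm
    · show A.origin + C.origin = π.origin
      show p + (π.origin - p) = π.origin
      omega

end CPerm
namespace CPerm

lemma ext_getD {l1 l2 : List ℕ} (h : l1.length = l2.length)
    (h2 : ∀ k, k < l1.length → l1.getD k 0 = l2.getD k 0) : l1 = l2 := by
  refine List.ext_getElem h (fun i hi hi' => ?_)
  have := h2 i hi
  rwa [List.getD_eq_getElem _ _ hi, List.getD_eq_getElem _ _ hi'] at this

lemma length_pos {p : CPerm} (hp : p.IsValid) : 1 ≤ p.vals.length := by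
  cases hh : p.vals with
  | nil => exact absurd hh hp.1
  | cons a l => simp [hh]

/-- quadrant-1 extremes: origin first, value minimal. -/
lemma oneQuadrant1 {p : CPerm} (hp : p.IsValid) (h0 : p.origin = 0) (hv : p.originVal = 0) :
    OneQuadrant p 1 := by
  intro i hi hne
  refine ⟨hi, hne, Or.inl ⟨rfl, by omega, ?_⟩⟩
  rw [hv]
  rcases Nat.eq_zero_or_pos (p.valAt i) with h | h
  · exact absurd (hp.valAt_inj hi hp.2.1 (by rw [h, ← hv]; rfl)) hne
  · exact h

lemma oneQuadrant2 {p : CPerm} (hp : p.IsValid) (h0 : p.origin = p.vals.length - 1)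
    (hv : p.originVal = 0) : OneQuadrant p 2 := by
  intro i hi hne
  refine ⟨hi, hne, Or.inr (Or.inl ⟨rfl, by omega, ?_⟩)⟩
  rw [hv]
  rcases Nat.eq_zero_or_pos (p.valAt i) with h | h
  · exact absurd (hp.valAt_inj hi hp.2.1 (by rw [h, ← hv]; rfl)) hne
  · exact h

lemma oneQuadrant3 {p : CPerm} (hp : p.IsValid) (h0 : p.origin = p.vals.length - 1)
    (hv : p.originVal = p.vals.length - 1) : OneQuadrant p 3 := by
  intro i hi hne
  refine ⟨hi, hne, Or.inr (Or.inr (Or.inl ⟨rfl, by omega, ?_⟩))⟩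
  rw [hv]
  have h1 := hp.valAt_lt hi
  rcases Nat.lt_or_ge (p.valAt i) (p.vals.length - 1) with h | h
  · exact h
  · have : p.valAt i = p.vals.length - 1 := by omega
    exact absurd (hp.valAt_inj hi hp.2.1 (by rw [this, ← hv]; rfl)) hne

lemma oneQuadrant4 {p : CPerm} (hp : p.IsValid) (h0 : p.origin = 0)
    (hv : p.originVal = p.vals.length - 1) : OneQuadrant p 4 := by
  intro i hi hne
  refine ⟨hi, hne, Or.inr (Or.inr (Or.inr ⟨rfl, by omega, ?_⟩))⟩
  rw [hv]
  have h1 := hp.valAt_lt hi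
  rcases Nat.lt_or_ge (p.valAt i) (p.vals.length - 1) with h | h
  · exact h
  · have : p.valAt i = p.vals.length - 1 := by omega
    exact absurd (hp.valAt_inj hi hp.2.1 (by rw [this, ← hv]; rfl)) hne

/-- converse: extract origin position from a one-quadrant hypothesis -/
lemma origin_of_oneQuadrant {p : CPerm} (hp : p.IsValid) (hlen : 2 ≤ p.vals.length) {q : ℕ}
    (h : OneQuadrant p q) :
    (q = 1 ∨ q = 4 → p.origin = 0 ∧ (q = 1 → p.originVal = 0) ∧
      (q = 4 → p.originVal = p.vals.length - 1)) ∧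
    (q = 2 ∨ q = 3 → p.origin = p.vals.length - 1 ∧ (q = 2 → p.originVal = 0) ∧
      (q = 3 → p.originVal = p.vals.length - 1)) := by
  have horig : p.origin < p.vals.length := hp.2.1
  constructor
  · rintro (rfl | rfl)
    · have ho : p.origin = 0 := by
        by_contra hne
        obtain ⟨_, _, hq⟩ := h 0 (by omega) (Ne.symm hne)
        rcases hq with ⟨_, h2, _⟩ | ⟨hq, _⟩ | ⟨hq, _⟩ | ⟨hq, _⟩ <;> omega
      refine ⟨ho, fun _ => ?_, fun h4 => by omega⟩
      obtain ⟨j, hj, hjv⟩ := hp.exists_idx (show 0 < p.vals.length by omega)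
      rcases eq_or_ne j p.origin with rfl | hne
      · exact hjv
      · obtain ⟨_, _, hq⟩ := h j hj hne
        rcases hq with ⟨_, _, h2⟩ | ⟨hq, _⟩ | ⟨hq, _⟩ | ⟨hq, _⟩ <;> omega
    · have ho : p.origin = 0 := by
        by_contra hne
        obtain ⟨_, _, hq⟩ := h 0 (by omega) (Ne.symm hne)
        rcases hq with ⟨hq, _⟩ | ⟨hq, _⟩ | ⟨hq, _⟩ | ⟨_, h2, _⟩ <;> omega
      refine ⟨ho, fun h1 => by omega, fun _ => ?_⟩
      obtain ⟨j, hj, hjv⟩ := hp.exists_idx (show p.vals.length - 1 < p.vals.length by omega)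
      rcases eq_or_ne j p.origin with rfl | hne
      · exact hjv
      · obtain ⟨_, _, hq⟩ := h j hj hne
        have := hp.originVal_lt
        rcases hq with ⟨hq, _⟩ | ⟨hq, _⟩ | ⟨hq, _⟩ | ⟨_, _, h2⟩ <;> omega
  · rintro (rfl | rfl)
    · have ho : p.origin = p.vals.length - 1 := by
        by_contra hne
        obtain ⟨_, _, hq⟩ := h (p.vals.length - 1) (by omega) (by omega)
        rcases hq with ⟨hq, _⟩ | ⟨_, h2, _⟩ | ⟨hq, _⟩ | ⟨hq, _⟩ <;> omega
      refine ⟨ho, fun _ => ?_, fun h3 => by omega⟩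
      obtain ⟨j, hj, hjv⟩ := hp.exists_idx (show 0 < p.vals.length by omega)
      rcases eq_or_ne j p.origin with rfl | hne
      · exact hjv
      · obtain ⟨_, _, hq⟩ := h j hj hne
        rcases hq with ⟨hq, _⟩ | ⟨_, _, h2⟩ | ⟨hq, _⟩ | ⟨hq, _⟩ <;> omega
    · have ho : p.origin = p.vals.length - 1 := by
        by_contra hne
        obtain ⟨_, _, hq⟩ := h (p.vals.length - 1) (by omega) (by omega)
        rcases hq with ⟨hq, _⟩ | ⟨_, h2, _⟩ | ⟨_, h2, _⟩ | ⟨hq, _⟩ <;> omega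
      refine ⟨ho, fun h2 => by omega, fun _ => ?_⟩
      obtain ⟨j, hj, hjv⟩ := hp.exists_idx (show p.vals.length - 1 < p.vals.length by omega)
      rcases eq_or_ne j p.origin with rfl | hne
      · exact hjv
      · obtain ⟨_, _, hq⟩ := h j hj hne
        have := hp.originVal_lt
        rcases hq with ⟨hq, _⟩ | ⟨hq, _⟩ | ⟨_, _, h2⟩ | ⟨hq, _⟩ <;> omega

/-- Easy direction for quadrants 1/3: `π` bottom-left-origin, `σ` top-right-origin. -/
lemma comm13 (π σ : CPerm) (hπ : π.IsValid) (hσ : σ.IsValid)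
    (ha : π.origin = 0) (hva : π.originVal = 0)
    (hb : σ.origin = σ.vals.length - 1) (hvb : σ.originVal = σ.vals.length - 1) :
    boxSum π σ = boxSum σ π := by
  set m := π.vals.length with hm
  set n := σ.vals.length with hn
  have hm1 : 1 ≤ m := length_pos hπ
  have hn1 : 1 ≤ n := length_pos hσ
  refine ext' (ext_getD ?_ ?_) ?_
  · rw [boxSum_length _ _ hσ, boxSum_length _ _ hπ]; omega
  · intro k hk
    rw [boxSum_length _ _ hσ] at hk
    rcases Nat.lt_or_ge k (n - 1) with h1 | h1
    · rw [boxSum_valAt_left _ _ hσ (by omega), boxSum_valAt_mid _ _ hσ hπ (by omega) (by omega)]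
      have hlt : σ.valAt k < σ.originVal := by
        have := hσ.valAt_lt (show k < n by omega)
        rcases Nat.lt_or_ge (σ.valAt k) (n - 1) with h | h
        · omega
        · have he : σ.valAt k = σ.valAt σ.origin := by
            show _ = σ.originVal
            omega
          have := hσ.valAt_inj (by omega) hσ.2.1 he
          omega
      rw [if_pos hlt, ha, Nat.sub_zero, hva]
      omega
    · rcases Nat.lt_or_ge k n with h2 | h2
      · -- k = n - 1 : both give the origin value
        have hk' : k = n - 1 := by omega
        rw [boxSum_valAt_mid _ _ hπ hσ (by omega) (by omega),
          boxSum_valAt_mid _ _ hσ hπ (by omega) (by omega)]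
        have e1 : k - σ.origin = 0 := by omega
        have e2 : k - π.origin = k := by omega
        rw [e1, e2]
        have g1 : π.valAt 0 = π.originVal := by rw [← ha]; rfl
        have g2 : σ.valAt k = σ.originVal := by rw [hk', ← hb]; rfl
        omega
      · rw [boxSum_valAt_mid _ _ hπ hσ (by omega) (by omega),
          boxSum_valAt_right _ _ hσ hπ (by omega) (by omega)]
        have hge : ¬ π.valAt (k + 1 - n) < π.originVal := by rw [hva]; omega
        rw [if_neg hge]
        have e1 : k - σ.origin = k + 1 - n := by omega
        rw [e1, hvb]
        try omega
  · show σ.origin + π.origin = π.origin + σ.origin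
    omega

/-- Easy direction for quadrants 2/4: `π` bottom-right-origin, `σ` top-left-origin. -/
lemma comm24 (π σ : CPerm) (hπ : π.IsValid) (hσ : σ.IsValid)
    (ha : π.origin = π.vals.length - 1) (hva : π.originVal = 0)
    (hb : σ.origin = 0) (hvb : σ.originVal = σ.vals.length - 1) :
    boxSum π σ = boxSum σ π := by
  set m := π.vals.length with hm
  set n := σ.vals.length with hn
  have hm1 : 1 ≤ m := length_pos hπ
  have hn1 : 1 ≤ n := length_pos hσ
  refine ext' (ext_getD ?_ ?_) ?_
  · rw [boxSum_length _ _ hσ, boxSum_length _ _ hπ]; omega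
  · intro k hk
    rw [boxSum_length _ _ hσ] at hk
    rcases Nat.lt_or_ge k (m - 1) with h1 | h1
    · rw [boxSum_valAt_mid _ _ hπ hσ (by omega) (by omega),
        boxSum_valAt_left _ _ hπ (by omega)]
      have hge : ¬ π.valAt k < π.originVal := by rw [hva]; omega
      rw [if_neg hge]
      have e1 : k - σ.origin = k := by omega
      rw [e1, hvb]
      try omega
    · rcases Nat.lt_or_ge k m with h2 | h2
      · have hk' : k = m - 1 := by omega
        rw [boxSum_valAt_mid _ _ hπ hσ (by omega) (by omega),
          boxSum_valAt_mid _ _ hσ hπ (by omega) (by omega)]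
        have e1 : k - σ.origin = k := by omega
        have e2 : k - π.origin = 0 := by omega
        rw [e1, e2]
        have g1 : π.valAt k = π.originVal := by rw [hk', ← ha]; rfl
        have g2 : σ.valAt 0 = σ.originVal := by rw [← hb]; rfl
        omega
      · rw [boxSum_valAt_right _ _ hπ hσ (by omega) (by omega),
          boxSum_valAt_mid _ _ hσ hπ (by omega) (by omega)]
        have hlt : σ.valAt (k + 1 - π.vals.length) < σ.originVal := by
          have hik : k + 1 - π.vals.length < n := by omega
          have := hσ.valAt_lt hik
          rcases Nat.lt_or_ge (σ.valAt (k + 1 - π.vals.length)) (n - 1) with h | h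
          · omega
          · have he : σ.valAt (k + 1 - π.vals.length) = σ.valAt σ.origin := by
              show _ = σ.originVal
              omega
            have := hσ.valAt_inj (by omega) hσ.2.1 he
            omega
        rw [if_pos hlt]
        have e1 : k - π.origin = k + 1 - π.vals.length := by omega
        rw [e1, hva]
        try omega
  · show σ.origin + π.origin = π.origin + σ.origin
    omega

end CPerm
namespace CPerm

lemma main_le (π σ : CPerm) (hπ : π.IsValid) (hσ : σ.IsValid)
    (hπi : π.BoxIndecomposable) (hσi : σ.BoxIndecomposable)
    (hmn : π.vals.length ≤ σ.vals.length)
    (h : boxSum π σ = boxSum σ π) :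
    π = σ ∨ ∃ q₁ q₂ : ℕ, OppositeQuadrants q₁ q₂ ∧ OneQuadrant π q₁ ∧ OneQuadrant σ q₂ := by
  have hm2 : 2 ≤ π.vals.length := by
    have h1 := hπi.1; have h2 := length_pos hπ; unfold len at h1; omega
  have hn2 : 2 ≤ σ.vals.length := by
    have h1 := hσi.1; have h2 := length_pos hσ; unfold len at h1; omega
  have ha : π.origin < π.vals.length := hπ.2.1
  have hb : σ.origin < σ.vals.length := hσ.2.1
  have hva : π.originVal < π.vals.length := hπ.originVal_lt
  have hvb : σ.originVal < σ.vals.length := hσ.originVal_lt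
  have E : ∀ k, (boxSum π σ).vals.getD k 0 = (boxSum σ π).vals.getD k 0 := fun k => by rw [h]
  -- Claim A: every value in the common value window is attained inside the common
  -- position window.
  have claimA : ∀ x, σ.originVal ≤ x → π.originVal ≤ x → x < σ.originVal + π.vals.length →
      x < π.originVal + σ.vals.length →
      σ.origin + π.vals.idxOf (x - σ.originVal) < σ.origin + π.vals.length ∧
      π.origin ≤ σ.origin + π.vals.idxOf (x - σ.originVal) ∧
      σ.origin + π.vals.idxOf (x - σ.originVal) < π.origin + σ.vals.length ∧
      (boxSum π σ).vals.getD (σ.origin + π.vals.idxOf (x - σ.originVal)) 0 = x := by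
    intro x h1 h2 h3 h4
    have hxm : x - σ.originVal ∈ π.vals := hπ.mem_iff.2 (by omega)
    have hjlt : π.vals.idxOf (x - σ.originVal) < π.vals.length := List.idxOf_lt_length_iff.2 hxm
    set j := π.vals.idxOf (x - σ.originVal) with hjdef
    have hval : π.valAt j = x - σ.originVal := by
      rw [valAt, List.getD_eq_getElem _ _ hjlt]
      exact List.getElem_idxOf hjlt
    have hτ : (boxSum π σ).vals.getD (σ.origin + j) 0 = x := by
      rw [boxSum_valAt_mid _ _ hπ hσ (by omega) (by omega)]
      have e : σ.origin + j - σ.origin = j := by omega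
      rw [e, hval]; omega
    refine ⟨by omega, ?_, ?_, hτ⟩
    · by_contra hcon
      push_neg at hcon
      have hE := E (σ.origin + j)
      rw [hτ, boxSum_valAt_left σ π hπ hcon] at hE
      have hne : π.valAt (σ.origin + j) ≠ π.originVal := fun hEq => by
        have := hπ.valAt_inj (by omega) hπ.2.1 hEq
        omega
      have hvlt := hπ.valAt_lt (show σ.origin + j < π.vals.length by omega)
      split_ifs at hE <;> omega
    · by_contra hcon
      push_neg at hcon
      have hE := E (σ.origin + j)
      rw [hτ, boxSum_valAt_right σ π hσ hπ (by omega) (by omega)] at hE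
      have hne : π.valAt (σ.origin + j + 1 - σ.vals.length) ≠ π.originVal := fun hEq => by
        have := hπ.valAt_inj (show σ.origin + j + 1 - σ.vals.length < π.vals.length by omega)
          hπ.2.1 hEq
        omega
      have hvlt := hπ.valAt_lt
        (show σ.origin + j + 1 - σ.vals.length < π.vals.length by omega)
      split_ifs at hE <;> omega
  -- Claim C: positions in the common position window take values in the common
  -- value window.
  have claimC : ∀ k, π.origin ≤ k → σ.origin ≤ k → k < σ.origin + π.vals.length →
      k < π.origin + σ.vals.length →
      ((boxSum π σ).vals.getD k 0 = π.valAt (k - σ.origin) + σ.originVal ∧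
       (boxSum π σ).vals.getD k 0 = σ.valAt (k - π.origin) + π.originVal ∧
       σ.originVal ≤ (boxSum π σ).vals.getD k 0 ∧ π.originVal ≤ (boxSum π σ).vals.getD k 0 ∧
       (boxSum π σ).vals.getD k 0 < σ.originVal + π.vals.length ∧
       (boxSum π σ).vals.getD k 0 < π.originVal + σ.vals.length) := by
    intro k h1 h2 h3 h4
    have t1 : (boxSum π σ).vals.getD k 0 = π.valAt (k - σ.origin) + σ.originVal :=
      boxSum_valAt_mid π σ hπ hσ h2 h3
    have t2 : (boxSum π σ).vals.getD k 0 = σ.valAt (k - π.origin) + π.originVal :=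
      (E k).trans (boxSum_valAt_mid σ π hσ hπ h1 h4)
    have u1 := hπ.valAt_lt (show k - σ.origin < π.vals.length by omega)
    have u2 := hσ.valAt_lt (show k - π.origin < σ.vals.length by omega)
    exact ⟨t1, t2, by omega, by omega, by omega, by omega⟩
  -- the origin of the box-sum
  have claimO : (boxSum π σ).vals.getD (π.origin + σ.origin) 0 =
      π.originVal + σ.originVal := by
    rw [boxSum_valAt_mid π σ hπ hσ (by omega) (by omega)]
    have e : π.origin + σ.origin - σ.origin = π.origin := by omega
    rw [e]
    rfl
  set V1 := max σ.originVal π.originVal with hV1def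
  set V2 := if σ.originVal + π.vals.length ≤ π.originVal + σ.vals.length
    then σ.originVal + π.vals.length else π.originVal + σ.vals.length with hV2def
  have hV2p : V2 ≤ σ.originVal + π.vals.length ∧ V2 ≤ π.originVal + σ.vals.length ∧
      (V2 = σ.originVal + π.vals.length ∨ V2 = π.originVal + σ.vals.length) := by
    rw [hV2def]; split_ifs <;> omega
  have hV1p : σ.originVal ≤ V1 ∧ π.originVal ≤ V1 ∧
      (V1 = σ.originVal ∨ V1 = π.originVal) := by
    rw [hV1def]; rcases max_choice σ.originVal π.originVal with h' | h' <;> rw [h'] <;> omega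
  -- value singleton window facts derived later per case
  rcases Nat.lt_or_ge σ.origin π.origin with hba | hab
  · -- Case (ii) : the π-block sticks out to the left; common window is [a, b+m)
    have hwin : σ.origin + π.vals.length < π.origin + σ.vals.length := by omega
    have hcount : (Finset.Ico V1 V2).card ≤
        (Finset.Ico π.origin (σ.origin + π.vals.length)).card := by
      refine Finset.card_le_card_of_injOn
        (fun x => σ.origin + π.vals.idxOf (x - σ.originVal)) ?_ ?_
      · intro x hx
        rw [Finset.mem_coe, Finset.mem_Ico] at hx ⊢
        obtain ⟨c1, c2, c3, c4⟩ := claimA x (by omega) (by omega) (by omega) (by omega)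
        exact ⟨c2, c1⟩
      · intro x hx y hy hxy
        simp only [Finset.coe_Ico, Set.mem_Ico] at hx hy
        obtain ⟨_, _, _, c4x⟩ := claimA x (by omega) (by omega) (by omega) (by omega)
        obtain ⟨_, _, _, c4y⟩ := claimA y (by omega) (by omega) (by omega) (by omega)
        simp only at hxy
        rw [← c4x, ← c4y, hxy]
    rw [Nat.card_Ico, Nat.card_Ico] at hcount
    -- decompose π along the common block
    obtain ⟨C, A, hCv, hAv, hClen, hAlen, hCA⟩ :=
      decomp π hπ (π.origin - σ.origin) (σ.origin + π.vals.length - π.origin) (V1 - σ.originVal)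
        (by omega) (by omega) (by omega) (by omega)
        (by
          intro j hj
          obtain ⟨t1, _, c1, c2, c3, c4⟩ :=
            claimC (π.origin + j) (by omega) (by omega) (by omega) (by omega)
          have e : π.origin + j - σ.origin = π.origin - σ.origin + j := by omega
          rw [e] at t1
          constructor <;> omega)
    have hc1 : σ.origin + π.vals.length - π.origin = 1 := by
      by_contra hc
      exact hπi.2 ⟨C, A, hCv, hAv, by omega, by omega, hCA⟩
    have hb0 : σ.origin = 0 := by omega
    have ha0 : π.origin = π.vals.length - 1 := by omega
    -- value window is a singleton containing the origin value
    obtain ⟨_, _, o1, o2, o3, o4⟩ :=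
      claimC (π.origin + σ.origin) (by omega) (by omega) (by omega) (by omega)
    rw [claimO] at o1 o2 o3 o4
    have key : (π.originVal = 0 ∧ σ.originVal = σ.vals.length - 1) ∨
        (σ.originVal = 0 ∧ π.originVal = π.vals.length - 1) := by
      rcases hV2p.2.2 with h' | h' <;> rcases hV1p.2.2 with h'' | h'' <;> omega
    rcases key with ⟨k1, k2⟩ | ⟨k1, k2⟩
    · exact Or.inr ⟨2, 4, Or.inr (Or.inr (Or.inl ⟨rfl, rfl⟩)),
        oneQuadrant2 hπ ha0 k1, oneQuadrant4 hσ hb0 k2⟩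
    · exact Or.inr ⟨3, 1, Or.inr (Or.inl ⟨rfl, rfl⟩),
        oneQuadrant3 hπ ha0 k2, oneQuadrant1 hσ hb0 k1⟩
  · rcases Nat.lt_or_ge (π.origin + σ.vals.length) (σ.origin + π.vals.length) with hwin | hwin
    · -- Case (iii) : the π-block sticks out to the right; common window is [b, a+n)
      have hcount : (Finset.Ico V1 V2).card ≤
          (Finset.Ico σ.origin (π.origin + σ.vals.length)).card := by
        refine Finset.card_le_card_of_injOn
          (fun x => σ.origin + π.vals.idxOf (x - σ.originVal)) ?_ ?_
        · intro x hx
          rw [Finset.mem_coe, Finset.mem_Ico] at hx ⊢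
          obtain ⟨c1, c2, c3, c4⟩ := claimA x (by omega) (by omega) (by omega) (by omega)
          exact ⟨Nat.le_add_right _ _, c3⟩
        · intro x hx y hy hxy
          simp only [Finset.coe_Ico, Set.mem_Ico] at hx hy
          obtain ⟨_, _, _, c4x⟩ := claimA x (by omega) (by omega) (by omega) (by omega)
          obtain ⟨_, _, _, c4y⟩ := claimA y (by omega) (by omega) (by omega) (by omega)
          simp only at hxy
          rw [← c4x, ← c4y, hxy]
      rw [Nat.card_Ico, Nat.card_Ico] at hcount
      obtain ⟨C, A, hCv, hAv, hClen, hAlen, hCA⟩ :=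
        decomp π hπ 0 (π.origin + σ.vals.length - σ.origin) (V1 - σ.originVal)
          (by omega) (by omega) (by omega) (by omega)
          (by
            intro j hj
            obtain ⟨t1, _, c1, c2, c3, c4⟩ :=
              claimC (σ.origin + j) (by omega) (by omega) (by omega) (by omega)
            have e : σ.origin + j - σ.origin = 0 + j := by omega
            rw [e] at t1
            constructor <;> omega)
      have hc1 : π.origin + σ.vals.length - σ.origin = 1 := by
        by_contra hc
        exact hπi.2 ⟨C, A, hCv, hAv, by omega, by omega, hCA⟩
      have ha0 : π.origin = 0 := by omega
      have hb0 : σ.origin = σ.vals.length - 1 := by omega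
      obtain ⟨_, _, o1, o2, o3, o4⟩ :=
        claimC (π.origin + σ.origin) (by omega) (by omega) (by omega) (by omega)
      rw [claimO] at o1 o2 o3 o4
      have key : (π.originVal = 0 ∧ σ.originVal = σ.vals.length - 1) ∨
          (σ.originVal = 0 ∧ π.originVal = π.vals.length - 1) := by
        rcases hV2p.2.2 with h' | h' <;> rcases hV1p.2.2 with h'' | h'' <;> omega
      rcases key with ⟨k1, k2⟩ | ⟨k1, k2⟩
      · exact Or.inr ⟨1, 3, Or.inl ⟨rfl, rfl⟩,
          oneQuadrant1 hπ ha0 k1, oneQuadrant3 hσ hb0 k2⟩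
      · exact Or.inr ⟨4, 2, Or.inr (Or.inr (Or.inr ⟨rfl, rfl⟩)),
          oneQuadrant4 hπ ha0 k2, oneQuadrant2 hσ hb0 k1⟩
    · -- Case (i) : the π-block is contained in the σ-block
      have Eq1 : ∀ j, j < π.vals.length →
          σ.valAt (σ.origin - π.origin + j) + π.originVal = π.valAt j + σ.originVal := by
        intro j hj
        obtain ⟨t1, t2, _, _, _, _⟩ :=
          claimC (σ.origin + j) (by omega) (by omega) (by omega) (by omega)
        have e1 : σ.origin + j - σ.origin = j := by omega
        have e2 : σ.origin + j - π.origin = σ.origin - π.origin + j := by omega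
        rw [e1] at t1
        rw [e2] at t2
        omega
      have hvle : π.originVal ≤ σ.originVal := by
        obtain ⟨j0, hj0, hj0v⟩ := hπ.exists_idx (show 0 < π.vals.length by omega)
        have := Eq1 j0 hj0
        omega
      obtain ⟨C, A, hCv, hAv, hClen, hAlen, hCA⟩ :=
        decomp σ hσ (σ.origin - π.origin) π.vals.length (σ.originVal - π.originVal)
          (by omega) (by omega) (by omega) (by omega)
          (by
            intro j hj
            have := Eq1 j hj
            have := hπ.valAt_lt hj
            constructor <;> omega)
      have hnm : σ.vals.length = π.vals.length := by
        by_contra hc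
        exact hσi.2 ⟨C, A, hCv, hAv, by omega, by omega, hCA⟩
      have hab' : π.origin = σ.origin := by omega
      have hEq2 : ∀ j, j < π.vals.length → σ.valAt j + π.originVal = π.valAt j + σ.originVal := by
        intro j hj
        have := Eq1 j hj
        rwa [show σ.origin - π.origin + j = j by omega] at this
      have hveq : π.originVal = σ.originVal := by
        obtain ⟨j1, hj1, hj1v⟩ := hσ.exists_idx (show 0 < σ.vals.length by omega)
        have := hEq2 j1 (by omega)
        omega
      refine Or.inl (ext' (ext_getD (by omega) ?_) (by omega))
      intro k hk
      have := hEq2 k hk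
      show π.valAt k = σ.valAt k
      omega

lemma oppositeQuadrants_symm {q₁ q₂ : ℕ} (h : OppositeQuadrants q₁ q₂) :
    OppositeQuadrants q₂ q₁ := by
  rcases h with ⟨h1, h2⟩ | ⟨h1, h2⟩ | ⟨h1, h2⟩ | ⟨h1, h2⟩ <;> subst h1 <;> subst h2 <;>
    first
    | exact Or.inl ⟨rfl, rfl⟩
    | exact Or.inr (Or.inl ⟨rfl, rfl⟩)
    | exact Or.inr (Or.inr (Or.inl ⟨rfl, rfl⟩))
    | exact Or.inr (Or.inr (Or.inr ⟨rfl, rfl⟩))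

end CPerm

/-- Two ⊞-indecomposable centred permutations commute under
the box-sum iff they are equal or are one-quadrant permutations from opposite
quadrants. -/
theorem boxSum_comm_iff (π σ : CPerm) (hπ : π.IsValid) (hσ : σ.IsValid)
    (hπi : π.BoxIndecomposable) (hσi : σ.BoxIndecomposable) :
    CPerm.boxSum π σ = CPerm.boxSum σ π ↔
      π = σ ∨ ∃ q₁ q₂ : ℕ, CPerm.OppositeQuadrants q₁ q₂ ∧
        CPerm.OneQuadrant π q₁ ∧ CPerm.OneQuadrant σ q₂ := by
  constructor
  · intro h
    rcases Nat.le_total π.vals.length σ.vals.length with hle | hle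
    · exact CPerm.main_le π σ hπ hσ hπi hσi hle h
    · rcases CPerm.main_le σ π hσ hπ hσi hπi hle h.symm with heq | ⟨q₁, q₂, hopp, h1, h2⟩
      · exact Or.inl heq.symm
      · exact Or.inr ⟨q₂, q₁, CPerm.oppositeQuadrants_symm hopp, h2, h1⟩
  · rintro (rfl | ⟨q₁, q₂, hopp, h1, h2⟩)
    · rfl
    · have hm2 : 2 ≤ π.vals.length := by
        have h1' := hπi.1; have h2' := CPerm.length_pos hπ; unfold CPerm.len at h1'; omega
      have hn2 : 2 ≤ σ.vals.length := by
        have h1' := hσi.1; have h2' := CPerm.length_pos hσ; unfold CPerm.len at h1'; omega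
      rcases hopp with ⟨rfl, rfl⟩ | ⟨rfl, rfl⟩ | ⟨rfl, rfl⟩ | ⟨rfl, rfl⟩
      · obtain ⟨o1, v1, -⟩ := (CPerm.origin_of_oneQuadrant hπ hm2 h1).1 (Or.inl rfl)
        obtain ⟨o2, -, v2⟩ := (CPerm.origin_of_oneQuadrant hσ hn2 h2).2 (Or.inr rfl)
        exact CPerm.comm13 π σ hπ hσ o1 (v1 rfl) o2 (v2 rfl)
      · obtain ⟨o1, -, v1⟩ := (CPerm.origin_of_oneQuadrant hπ hm2 h1).2 (Or.inr rfl)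
        obtain ⟨o2, v2, -⟩ := (CPerm.origin_of_oneQuadrant hσ hn2 h2).1 (Or.inl rfl)
        exact (CPerm.comm13 σ π hσ hπ o2 (v2 rfl) o1 (v1 rfl)).symm
      · obtain ⟨o1, v1, -⟩ := (CPerm.origin_of_oneQuadrant hπ hm2 h1).2 (Or.inl rfl)
        obtain ⟨o2, -, v2⟩ := (CPerm.origin_of_oneQuadrant hσ hn2 h2).1 (Or.inr rfl)
        exact CPerm.comm24 π σ hπ hσ o1 (v1 rfl) o2 (v2 rfl)
      · obtain ⟨o1, -, v1⟩ := (CPerm.origin_of_oneQuadrant hπ hm2 h1).1 (Or.inr rfl)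
        obtain ⟨o2, v2, -⟩ := (CPerm.origin_of_oneQuadrant hσ hn2 h2).2 (Or.inl rfl)
        exact (CPerm.comm24 σ π hσ hπ o2 (v2 rfl) o1 (v1 rfl)).symm
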